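/- arXiv:1307.3881 — 3 statements merged into one kernel-verified Lean document; each statement's English description precedes it below -/
import Mathlib

section
/- Let D be a linearly connected digraph with exactly two strong components D_1 and D_2, both nontrivial, with indices of imprimitivity κ_1, κ_2 and sets of imprimitivity U_i^{(1)} (i ∈ ZMod κ_1) and U_j^{(2)} (j ∈ ZMod κ_2). Fix i ∈ ZMod κ_1 and j ∈ ZMod κ_2. Then the following are equivalent: (a) there exist vertices u ∈ U_i^{(1)} and v ∈ U_j^{(2)} and a positive integer s such that D has a directed (u,v)-walk of length 2sκ_1κ_2; (b) for every x ∈ U_i^{(1)} and every y ∈ U_j^{(2)} there exists a positive integer N such that, for every integer t ≥ N, D has a directed (x,y)-walk of length 2tκ_1κ_2. -/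
/-!
The lengths of the closed walks at a vertex `x` of a strong component form an additive
submonoid of `ℕ` whose gcd is the index of imprimitivity `κ` (a closed walk at another vertex
is conjugated to one at `x` by a walk there and back), so by the Frobenius-number argument it
contains every large multiple of `κ`. A walk between two vertices with the same label has
length divisible by `κ`; hence two such vertices are joined by walks of every large length
divisible by `κ`. Padding the given walk of length `2sκ₁κ₂` by such walks inside `D₁` and `D₂`
gives walks of every large length `2tκ₁κ₂`. Conversely, in a nontrivial component every label
is attained, so (b) does produce a walk as in (a).
-/

/-- A digraph: a finite vertex type with an irreflexive arc relation (no loops). -/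
structure Digraph' (V : Type*) where
  Adj : V → V → Prop
  irrefl : ∀ v, ¬ Adj v v

namespace Digraph'

variable {V : Type*}

/-- There is a directed walk of length `m` from `x` to `y` in `D`;
i.e. `y` is an `m`-step prey of `x`. -/
def HasWalk (D : Digraph' V) (m : ℕ) (x y : V) : Prop :=
  ∃ f : ℕ → V, f 0 = x ∧ f m = y ∧ ∀ t, t < m → D.Adj (f t) (f (t + 1))

/-- There is a directed walk of length `m` from `x` to `y` staying inside `S`. -/
def HasWalkIn (D : Digraph' V) (S : Set V) (m : ℕ) (x y : V) : Prop :=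
  ∃ f : ℕ → V, f 0 = x ∧ f m = y ∧ (∀ t, t ≤ m → f t ∈ S) ∧
    ∀ t, t < m → D.Adj (f t) (f (t + 1))

/-- The `m`-step competition graph `C(D^m)` of `D`. -/
def compGraph (D : Digraph' V) (m : ℕ) : SimpleGraph V where
  Adj u v := u ≠ v ∧ ∃ z, D.HasWalk m u z ∧ D.HasWalk m v z
  symm := ⟨by
    rintro u v ⟨hne, z, h1, h2⟩
    exact ⟨hne.symm, z, h2, h1⟩⟩
  loopless := ⟨fun v h => h.1 rfl⟩

/-- The sequence `{C(D^m)}_{m ≥ 1}` converges. -/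
def CompConverges (D : Digraph' V) : Prop :=
  ∃ N : ℕ, 1 ≤ N ∧ ∀ m, N ≤ m → D.compGraph m = D.compGraph N

/-- The sequence `{C(D^m)}_{m ≥ 1}` converges to the graph `G`. -/
def CompConvergesTo (D : Digraph' V) (G : SimpleGraph V) : Prop :=
  ∃ N : ℕ, 1 ≤ N ∧ ∀ m, N ≤ m → D.compGraph m = G

/-- `D` is linearly connected with strong components `Vset 1, …, Vset η`. -/
structure IsLinConn (D : Digraph' V) (η : ℕ) (Vset : ℕ → Set V) : Prop where
  nonempty : ∀ i, 1 ≤ i → i ≤ η → (Vset i).Nonempty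
  cover : ∀ v : V, ∃ i, 1 ≤ i ∧ i ≤ η ∧ v ∈ Vset i
  disjoint' : ∀ i j, 1 ≤ i → i ≤ η → 1 ≤ j → j ≤ η →
      ∀ v : V, v ∈ Vset i → v ∈ Vset j → i = j
  strong : ∀ i, 1 ≤ i → i ≤ η → ∀ x ∈ Vset i, ∀ y ∈ Vset i,
      ∃ m, D.HasWalkIn (Vset i) m x y
  arcs : ∀ x y : V, D.Adj x y → ∃ i, 1 ≤ i ∧
      ((i ≤ η ∧ x ∈ Vset i ∧ y ∈ Vset i) ∨
       (i + 1 ≤ η ∧ x ∈ Vset i ∧ y ∈ Vset (i + 1)))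
  linked : ∀ i, 1 ≤ i → i + 1 ≤ η → ∃ x ∈ Vset i, ∃ y ∈ Vset (i + 1), D.Adj x y

/-- A component with vertex set `S` is trivial if `S` is a singleton. -/
def IsTrivialComp (S : Set V) : Prop := ∃ v : V, S = {v}

/-- `κ` is the index of imprimitivity of the (strong) component with vertex set `S`:
the gcd of the lengths of all closed directed walks inside `S`. -/
def IsImprimIndex (D : Digraph' V) (S : Set V) (κ : ℕ) : Prop :=
  (∀ (x : V) (m : ℕ), x ∈ S → 0 < m → D.HasWalkIn S m x x → κ ∣ m) ∧
  ∀ d : ℕ, (∀ (x : V) (m : ℕ), x ∈ S → 0 < m → D.HasWalkIn S m x x → d ∣ m) → d ∣ κ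

/-- `u` is an imprimitivity labelling on `S`: along any arc inside `S` the label
increases by one.  Its fibers are the sets of imprimitivity. -/
def IsImprimLabelling (D : Digraph' V) (S : Set V) {κ : ℕ} (u : V → ZMod κ) : Prop :=
  ∀ x ∈ S, ∀ y ∈ S, D.Adj x y → u y = u x + 1

/-- `(k, l) ∈ I(D_{p,p+1})`: some arc goes from a vertex of `U_k^{(p)}` to a vertex of
`U_l^{(p+1)}`. -/
def InI (D : Digraph' V) (Vset : ℕ → Set V) {κ : ℕ → ℕ}
    (u : ∀ i : ℕ, V → ZMod (κ i)) (p : ℕ) (k : ZMod (κ p)) (l : ZMod (κ (p + 1))) : Prop :=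
  ∃ x ∈ Vset p, ∃ y ∈ Vset (p + 1), D.Adj x y ∧ u p x = k ∧ u (p + 1) y = l

/-- `(i, j)` is an edge of the bipartite graph `B_{p,p+1}`. -/
def BAdj (D : Digraph' V) (Vset : ℕ → Set V) {κ : ℕ → ℕ}
    (u : ∀ i : ℕ, V → ZMod (κ i)) (p : ℕ) (i : ZMod (κ p)) (j : ZMod (κ (p + 1))) : Prop :=
  ∃ (k : ZMod (κ p)) (l : ZMod (κ (p + 1))) (a : ℤ),
    InI D Vset u p k l ∧ i = k + 1 + (a : ZMod (κ p)) ∧ j = l + (a : ZMod (κ (p + 1)))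

/-- The competition skeleton graph (CS-graph) `PT_D^{(η)}`: vertices are pairs `⟨r, i⟩`
with `i ∈ ZMod (κ r)` (only `1 ≤ r ≤ η` carries edges); `⟨p, i⟩` and `⟨p+1, j⟩` are
adjacent exactly when `i` and `j` are adjacent in `B_{p,p+1}`. -/
def csGraph (D : Digraph' V) (Vset : ℕ → Set V) {κ : ℕ → ℕ}
    (u : ∀ i : ℕ, V → ZMod (κ i)) (η : ℕ) : SimpleGraph ((r : ℕ) × ZMod (κ r)) where
  Adj a b := ∃ p, 1 ≤ p ∧ p + 1 ≤ η ∧ ∃ (i : ZMod (κ p)) (j : ZMod (κ (p + 1))),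
    BAdj D Vset u p i j ∧
    ((a = ⟨p, i⟩ ∧ b = ⟨p + 1, j⟩) ∨ (a = ⟨p + 1, j⟩ ∧ b = ⟨p, i⟩))
  symm := ⟨by
    rintro a b ⟨p, h1, h2, i, j, hB, hab⟩
    exact ⟨p, h1, h2, i, j, hB,
      hab.elim (fun h => Or.inr ⟨h.2, h.1⟩) (fun h => Or.inl ⟨h.2, h.1⟩)⟩⟩
  loopless := ⟨by
    rintro a ⟨p, _, _, i, j, _, hab⟩
    rcases hab with ⟨ha, hb⟩ | ⟨ha, hb⟩
    · have h : p = p + 1 := congrArg Sigma.fst (ha.symm.trans hb)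
      omega
    · have h : p + 1 = p := congrArg Sigma.fst (ha.symm.trans hb)
      omega⟩

end Digraph'

namespace Digraph'

variable {V : Type*} {D : Digraph' V} {S : Set V} {m n : ℕ} {x y z : V}

theorem hasWalk_iff_hasWalkIn_univ : D.HasWalk m x y ↔ D.HasWalkIn Set.univ m x y := by
  simp [HasWalk, HasWalkIn]

theorem HasWalkIn.hasWalk (h : D.HasWalkIn S m x y) : D.HasWalk m x y :=
  let ⟨f, hf0, hfm, _, hfa⟩ := h
  ⟨f, hf0, hfm, hfa⟩

theorem hasWalkIn_zero_self (hx : x ∈ S) : D.HasWalkIn S 0 x x :=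
  ⟨fun _ => x, rfl, rfl, fun _ _ => hx, fun _ ht => absurd ht (Nat.not_lt_zero _)⟩

theorem hasWalkIn_one (hx : x ∈ S) (hy : y ∈ S) (h : D.Adj x y) : D.HasWalkIn S 1 x y :=
  ⟨fun t => if t = 0 then x else y, rfl, rfl, fun t _ => by dsimp only; split_ifs <;> assumption,
    fun t ht => by simpa [Nat.lt_one_iff.mp ht] using h⟩

theorem HasWalkIn.append (h₁ : D.HasWalkIn S m x y) (h₂ : D.HasWalkIn S n y z) :
    D.HasWalkIn S (m + n) x z := by
  obtain ⟨f, hf0, hfm, hfS, hfa⟩ := h₁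
  obtain ⟨g, hg0, hgn, hgS, hga⟩ := h₂
  refine ⟨fun t => if t ≤ m then f t else g (t - m), by simp [hf0], ?_,
    fun t ht => ?_, fun t ht => ?_⟩
  · rcases n.eq_zero_or_pos with rfl | hn
    · simp [hfm, hg0.symm.trans hgn]
    · simp [show ¬ m + n ≤ m by omega, hgn]
  · dsimp only
    split_ifs
    · exact hfS t ‹_›
    · exact hgS (t - m) (by omega)
  · dsimp only
    split_ifs with h h' h'
    · exact hfa t (by omega)
    · rw [show t = m by omega, Nat.add_sub_cancel_left, hfm, ← hg0]
      exact hga 0 (by omega)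
    · omega
    · rw [show t + 1 - m = t - m + 1 by omega]
      exact hga (t - m) (by omega)

theorem HasWalk.append (h₁ : D.HasWalk m x y) (h₂ : D.HasWalk n y z) :
    D.HasWalk (m + n) x z := by
  rw [hasWalk_iff_hasWalkIn_univ] at *
  exact h₁.append h₂

theorem HasWalkIn.ne_zero_of_ne (h : D.HasWalkIn S m x y) (hxy : x ≠ y) : m ≠ 0 := by
  rintro rfl
  obtain ⟨f, hf0, hfm, -⟩ := h
  exact hxy (hf0.symm.trans hfm)

theorem IsImprimLabelling.apply_of_hasWalkIn {κ : ℕ} {u : V → ZMod κ}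
    (hu : D.IsImprimLabelling S u) (h : D.HasWalkIn S m x y) : u y = u x + m := by
  obtain ⟨f, rfl, rfl, hfS, hfa⟩ := h
  induction m with
  | zero => simp
  | succ k ih =>
    rw [hu _ (hfS k (by omega)) _ (hfS _ le_rfl) (hfa k (by omega)),
      ih (fun t ht => hfS t (by omega)) (fun t ht => hfa t (by omega))]
    push_cast
    ring

def closedWalkLengths (D : Digraph' V) (S : Set V) (x : V) : Set ℕ :=
  {m | D.HasWalkIn S m x x}

theorem mem_closedWalkLengths_of_mem_closure (hx : x ∈ S)
    (h : m ∈ AddSubmonoid.closure (D.closedWalkLengths S x)) : m ∈ D.closedWalkLengths S x :=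
  AddSubmonoid.closure_induction (fun _ h => h) (hasWalkIn_zero_self hx)
    (fun _ _ _ _ h₁ h₂ => HasWalkIn.append h₁ h₂) h

def IsStronglyConnectedOn (D : Digraph' V) (S : Set V) : Prop :=
  ∀ x ∈ S, ∀ y ∈ S, ∃ m, D.HasWalkIn S m x y

namespace IsStronglyConnectedOn

variable (hS : D.IsStronglyConnectedOn S)
include hS

theorem exists_adj (hnt : ¬ IsTrivialComp S) (hx : x ∈ S) : ∃ z ∈ S, D.Adj x z := by
  obtain ⟨w, hw, hwx⟩ : ∃ w ∈ S, w ≠ x := by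
    by_contra! h
    exact hnt ⟨x, Set.eq_singleton_iff_unique_mem.mpr ⟨hx, h⟩⟩
  obtain ⟨m, hxw⟩ := hS x hx w hw
  have hm : 0 < m := Nat.pos_of_ne_zero (hxw.ne_zero_of_ne hwx.symm)
  obtain ⟨f, hf0, -, hfS, hfa⟩ := hxw
  exact ⟨f 1, hfS 1 hm, hf0 ▸ hfa 0 hm⟩

theorem exists_hasWalkIn (hnt : ¬ IsTrivialComp S) (hx : x ∈ S) :
    ∀ m, ∃ y ∈ S, D.HasWalkIn S m x y
  | 0 => ⟨x, hx, hasWalkIn_zero_self hx⟩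
  | m + 1 => by
    obtain ⟨y, hy, hw⟩ := exists_hasWalkIn hnt hx m
    obtain ⟨z, hz, hyz⟩ := hS.exists_adj hnt hy
    exact ⟨z, hz, hw.append (hasWalkIn_one hy hz hyz)⟩

theorem imprimIndex_pos {κ : ℕ} (hnt : ¬ IsTrivialComp S) (hκ : D.IsImprimIndex S κ)
    (hx : x ∈ S) : 0 < κ := by
  obtain ⟨z, hz, hxz⟩ := hS.exists_adj hnt hx
  obtain ⟨p, hp⟩ := hS z hz x hx
  refine Nat.pos_of_ne_zero fun h => ?_
  have := hκ.1 x (1 + p) hx (by omega) ((hasWalkIn_one hx hz hxz).append hp)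
  simp [h] at this

theorem surjOn_label {κ : ℕ} {u : V → ZMod κ} (hnt : ¬ IsTrivialComp S)
    (hκ : D.IsImprimIndex S κ) (hu : D.IsImprimLabelling S u) (hSne : S.Nonempty) : Set.SurjOn u S Set.univ := by
  obtain ⟨x, hx⟩ := hSne
  have : NeZero κ := ⟨(hS.imprimIndex_pos hnt hκ hx).ne'⟩
  intro c _
  obtain ⟨y, hy, hw⟩ := hS.exists_hasWalkIn hnt hx (c - u x).val
  exact ⟨y, hy, by rw [hu.apply_of_hasWalkIn hw, ZMod.natCast_zmod_val, add_sub_cancel]⟩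

theorem setGcd_closedWalkLengths {κ : ℕ} (hκ : D.IsImprimIndex S κ) (hx : x ∈ S) :
    Nat.setGcd (D.closedWalkLengths S x) = κ := by
  refine Nat.dvd_antisymm (hκ.2 _ fun z m hz _ hw => ?_) (Nat.dvd_setGcd_iff.mpr fun m hm => ?_)
  · obtain ⟨p, hp⟩ := hS x hx z hz
    obtain ⟨q, hq⟩ := hS z hz x hx
    have hpq := Nat.setGcd_dvd_of_mem (s := D.closedWalkLengths S x) (hp.append hq)
    have hpmq :=
      Nat.setGcd_dvd_of_mem (s := D.closedWalkLengths S x) ((hp.append hw).append hq)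
    rw [add_right_comm] at hpmq
    exact (Nat.dvd_add_right hpq).mp hpmq
  · rcases m.eq_zero_or_pos with rfl | hm0
    · exact dvd_zero κ
    · exact hκ.1 x m hx hm0 hm

theorem exists_hasWalkIn_of_label_eq {κ : ℕ} {u : V → ZMod κ} (hκ : D.IsImprimIndex S κ)
    (hu : D.IsImprimLabelling S u) (hx : x ∈ S) (hy : y ∈ S) (hxy : u x = u y) :
    ∃ M, ∀ m, M ≤ m → κ ∣ m → D.HasWalkIn S m x y := by
  obtain ⟨M, hM⟩ := Nat.exists_mem_closure_of_ge (D.closedWalkLengths S x)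
  rw [hS.setGcd_closedWalkLengths hκ hx] at hM
  obtain ⟨p, hp⟩ := hS x hx y hy
  have hκp : κ ∣ p := by
    have := hu.apply_of_hasWalkIn hp
    rw [hxy, left_eq_add, ZMod.natCast_eq_zero_iff] at this
    exact this
  refine ⟨M + p, fun m hm hκm => ?_⟩
  have hw : D.HasWalkIn S (m - p) x x :=
    mem_closedWalkLengths_of_mem_closure hx (hM (m - p) (by omega) (Nat.dvd_sub hκm hκp))
  simpa [Nat.sub_add_cancel (show p ≤ m by omega)] using hw.append hp

end IsStronglyConnectedOn

theorem exists_hasWalk_mul_of_hasWalk_mul {S₁ S₂ : Set V} {κ₁ κ₂ k s : ℕ}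
    {u₁ : V → ZMod κ₁} {u₂ : V → ZMod κ₂} {x x' y y' : V}
    (hS₁ : D.IsStronglyConnectedOn S₁) (hS₂ : D.IsStronglyConnectedOn S₂)
    (hκ₁ : D.IsImprimIndex S₁ κ₁) (hκ₂ : D.IsImprimIndex S₂ κ₂)
    (hu₁ : D.IsImprimLabelling S₁ u₁) (hu₂ : D.IsImprimLabelling S₂ u₂)
    (hk : 0 < k) (hκ₁k : κ₁ ∣ k) (hκ₂k : κ₂ ∣ k)
    (hx : x ∈ S₁) (hx' : x' ∈ S₁) (hux : u₁ x' = u₁ x)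
    (hy : y ∈ S₂) (hy' : y' ∈ S₂) (huy : u₂ y = u₂ y')
    (h : D.HasWalk (s * k) x y) : ∃ N, ∀ t, N ≤ t → D.HasWalk (t * k) x' y' := by
  obtain ⟨M₁, hM₁⟩ := hS₁.exists_hasWalkIn_of_label_eq hκ₁ hu₁ hx' hx hux
  obtain ⟨M₂, hM₂⟩ := hS₂.exists_hasWalkIn_of_label_eq hκ₂ hu₂ hy hy' huy
  refine ⟨M₁ + s + M₂, fun t ht => ?_⟩
  have h₁ := hM₁ (M₁ * k) (Nat.le_mul_of_pos_right _ hk) (Dvd.dvd.mul_left hκ₁k _)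
  have h₂ := hM₂ ((t - M₁ - s) * k) ((Nat.le_mul_of_pos_right _ hk).trans' (by omega))
    (Dvd.dvd.mul_left hκ₂k _)
  have hw := (h₁.hasWalk.append h).append h₂.hasWalk
  rwa [← add_mul, ← add_mul, show M₁ + s + (t - M₁ - s) = t by omega] at hw

end Digraph'

open Digraph' in
theorem stmt3_general {V : Type*} (D : Digraph' V) (Vset : ℕ → Set V)
    (hD : D.IsLinConn 2 Vset)
    (h1 : ¬ IsTrivialComp (Vset 1)) (h2 : ¬ IsTrivialComp (Vset 2))
    (κ : ℕ → ℕ) (u : ∀ i : ℕ, V → ZMod (κ i))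
    (hκ : ∀ i, 1 ≤ i → i ≤ 2 → IsImprimIndex D (Vset i) (κ i))
    (hu : ∀ i, 1 ≤ i → i ≤ 2 → IsImprimLabelling D (Vset i) (u i))
    (i : ZMod (κ 1)) (j : ZMod (κ 2)) :
    (∃ x ∈ Vset 1, u 1 x = i ∧ ∃ y ∈ Vset 2, u 2 y = j ∧
       ∃ s, 1 ≤ s ∧ D.HasWalk (2 * s * κ 1 * κ 2) x y) ↔
    (∀ x ∈ Vset 1, u 1 x = i → ∀ y ∈ Vset 2, u 2 y = j →
       ∃ N, 1 ≤ N ∧ ∀ t, N ≤ t → D.HasWalk (2 * t * κ 1 * κ 2) x y) := by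
  have hS₁ : D.IsStronglyConnectedOn (Vset 1) := hD.strong 1 le_rfl one_le_two
  have hS₂ : D.IsStronglyConnectedOn (Vset 2) := hD.strong 2 one_le_two le_rfl
  have hκ₁ := hκ 1 le_rfl one_le_two
  have hκ₂ := hκ 2 one_le_two le_rfl
  have hu₁ := hu 1 le_rfl one_le_two
  have hu₂ := hu 2 one_le_two le_rfl
  have hne₁ := hD.nonempty 1 le_rfl one_le_two
  have hne₂ := hD.nonempty 2 one_le_two le_rfl
  have hk : 0 < 2 * κ 1 * κ 2 := by
    have := hS₁.imprimIndex_pos h1 hκ₁ hne₁.some_mem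
    have := hS₂.imprimIndex_pos h2 hκ₂ hne₂.some_mem
    positivity
  simp only [show ∀ t, 2 * t * κ 1 * κ 2 = t * (2 * κ 1 * κ 2) from fun t => by ring]
  constructor
  · rintro ⟨x, hx, rfl, y, hy, rfl, s, -, hw⟩ x' hx' hx'i y' hy' hy'j
    obtain ⟨N, hN⟩ := exists_hasWalk_mul_of_hasWalk_mul hS₁ hS₂ hκ₁ hκ₂ hu₁ hu₂ hk
      ⟨2 * κ 2, by ring⟩ (dvd_mul_left _ _) hx hx' hx'i hy hy' hy'j.symm hw
    exact ⟨N + 1, Nat.le_add_left 1 N, fun t ht => hN t (by omega)⟩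
  · intro h
    obtain ⟨x, hx, rfl⟩ := hS₁.surjOn_label h1 hκ₁ hu₁ hne₁ (Set.mem_univ i)
    obtain ⟨y, hy, rfl⟩ := hS₂.surjOn_label h2 hκ₂ hu₂ hne₂ (Set.mem_univ j)
    obtain ⟨N, hN1, hN⟩ := h x hx rfl y hy rfl
    exact ⟨x, hx, rfl, y, hy, rfl, N, hN1, hN N le_rfl⟩

open Digraph' in
/-- equivalence of the existence of one long walk of length `2sκ₁κ₂`
between the imprimitivity classes `U_i^{(1)}` and `U_j^{(2)}` and the existence,
for all pairs, of walks of all sufficiently large such lengths. -/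
theorem stmt3 {V : Type*} [Fintype V] (D : Digraph' V) (Vset : ℕ → Set V)
    (hD : D.IsLinConn 2 Vset)
    (h1 : ¬ IsTrivialComp (Vset 1)) (h2 : ¬ IsTrivialComp (Vset 2))
    (κ : ℕ → ℕ) (u : ∀ i : ℕ, V → ZMod (κ i))
    (hκ : ∀ i, 1 ≤ i → i ≤ 2 → IsImprimIndex D (Vset i) (κ i))
    (hu : ∀ i, 1 ≤ i → i ≤ 2 → IsImprimLabelling D (Vset i) (u i))
    (i : ZMod (κ 1)) (j : ZMod (κ 2)) :
    (∃ x ∈ Vset 1, u 1 x = i ∧ ∃ y ∈ Vset 2, u 2 y = j ∧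
       ∃ s, 1 ≤ s ∧ D.HasWalk (2 * s * κ 1 * κ 2) x y) ↔
    (∀ x ∈ Vset 1, u 1 x = i → ∀ y ∈ Vset 2, u 2 y = j →
       ∃ N, 1 ≤ N ∧ ∀ t, N ≤ t → D.HasWalk (2 * t * κ 1 * κ 2) x y) :=
  stmt3_general D Vset hD h1 h2 κ u hκ hu i j
end

section
/- Let D be a linearly connected digraph with η ≥ 3 strong components, all nontrivial, and let p be an index with p + 2 ≤ η. Let x ∈ U_i^{(p)} and z ∈ U_k^{(p+2)}. If D has a directed (x,z)-walk of length s·κ_{p+1}κ_{p+2} for some positive integer s, then there exists j ∈ ZMod κ_{p+1} such that (i, j) is an edge of B_{p,p+1} and (j, k) is an edge of B_{p+1,p+2}. -/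
def UnitSteps (g : ℕ → ℕ) (M : ℕ) : Prop :=
  ∀ t < M, g (t + 1) = g t ∨ g (t + 1) = g t + 1

namespace UnitSteps

variable {g : ℕ → ℕ} {M : ℕ}

theorem monotoneOn (hg : UnitSteps g M) : MonotoneOn g (Set.Iic M) :=
  monotoneOn_of_le_succ Set.ordConnected_Iic fun t _ _ ht => by
    rw [Set.mem_Iic, Order.succ_eq_add_one] at ht
    rw [Order.succ_eq_add_one]
    rcases hg t (by omega) with h | h <;> omega

theorem eq_of_le_of_le (hg : UnitSteps g M) {a b t q : ℕ} (ha : g a = q) (hb : g b = q)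
    (hat : a ≤ t) (htb : t ≤ b) (hbM : b ≤ M) : g t = q :=
  le_antisymm (hb ▸ hg.monotoneOn (htb.trans hbM) hbM htb)
    (ha ▸ hg.monotoneOn (hat.trans (htb.trans hbM)) (htb.trans hbM) hat)

theorem exists_crossing (hg : UnitSteps g M) {q : ℕ} (h0 : g 0 ≤ q) (hM : q < g M) :
    ∃ t < M, g t = q ∧ g (t + 1) = q + 1 := by
  classical
  have hex : ∃ n, q < g n := ⟨M, hM⟩
  have hn : q < g (Nat.find hex) := Nat.find_spec hex
  have hnM : Nat.find hex ≤ M := Nat.find_min' hex hM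
  obtain ⟨t, ht⟩ : ∃ t, Nat.find hex = t + 1 :=
    Nat.exists_eq_succ_of_ne_zero fun h => by rw [h] at hn; omega
  have hgt : g t ≤ q := not_lt.1 (Nat.find_min hex (by omega))
  rw [ht] at hn
  refine ⟨t, by omega, ?_⟩
  rcases hg t (by omega) with h | h <;> omega

end UnitSteps

namespace Digraph'

variable {V : Type*} {D : Digraph' V} {η : ℕ} {Vset : ℕ → Set V}

namespace IsLinConn

noncomputable def componentIndex (hD : D.IsLinConn η Vset) (v : V) : ℕ :=
  (hD.cover v).choose

variable (hD : D.IsLinConn η Vset)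

theorem componentIndex_spec (v : V) :
    1 ≤ hD.componentIndex v ∧ hD.componentIndex v ≤ η ∧ v ∈ Vset (hD.componentIndex v) :=
  (hD.cover v).choose_spec

theorem mem_componentIndex (v : V) : v ∈ Vset (hD.componentIndex v) :=
  (hD.componentIndex_spec v).2.2

theorem componentIndex_eq_of_mem {v : V} {q : ℕ} (hq : 1 ≤ q) (hqη : q ≤ η)
    (hv : v ∈ Vset q) : hD.componentIndex v = q :=
  hD.disjoint' _ _ (hD.componentIndex_spec v).1 (hD.componentIndex_spec v).2.1 hq hqη v
    (hD.mem_componentIndex v) hv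

theorem componentIndex_adj {x y : V} (h : D.Adj x y) :
    hD.componentIndex y = hD.componentIndex x ∨
      hD.componentIndex y = hD.componentIndex x + 1 := by
  obtain ⟨q, hq, ⟨hqη, hx, hy⟩ | ⟨hqη, hx, hy⟩⟩ := hD.arcs x y h
  · left
    rw [hD.componentIndex_eq_of_mem hq hqη hx, hD.componentIndex_eq_of_mem hq hqη hy]
  · right
    rw [hD.componentIndex_eq_of_mem hq (by omega) hx,
      hD.componentIndex_eq_of_mem (by omega) hqη hy]

theorem unitSteps_componentIndex_walk {f : ℕ → V} {M : ℕ}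
    (hf : ∀ t, t < M → D.Adj (f t) (f (t + 1))) :
    UnitSteps (fun t => hD.componentIndex (f t)) M :=
  fun t ht => hD.componentIndex_adj (hf t ht)

end IsLinConn

theorem IsImprimLabelling.sub_eq_of_walk {S : Set V} {κ : ℕ} {u : V → ZMod κ}
    (hu : D.IsImprimLabelling S u) {f : ℕ → V} {a b : ℕ} (hab : a ≤ b)
    (hS : ∀ t, a ≤ t → t ≤ b → f t ∈ S)
    (hf : ∀ t, t < b → D.Adj (f t) (f (t + 1))) :
    u (f b) - b = u (f a) - a := by
  induction b, hab using Nat.le_induction with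
  | base => rfl
  | succ n han ih =>
    rw [hu _ (hS n han (by omega)) _ (hS (n + 1) (by omega) le_rfl) (hf n (by omega)),
      ← ih (fun t h1 h2 => hS t h1 (by omega)) (fun t ht => hf t (by omega))]
    push_cast
    ring

theorem bAdj_sub_of_adj {κ : ℕ → ℕ} (u : ∀ i : ℕ, V → ZMod (κ i)) {q : ℕ} {x y : V}
    (hx : x ∈ Vset q) (hy : y ∈ Vset (q + 1)) (h : D.Adj x y) (t : ℕ) :
    BAdj D Vset u q (u q x - t) (u (q + 1) y - (t + 1 : ℕ)) :=
  ⟨u q x, u (q + 1) y, -((t : ℤ) + 1), ⟨x, hx, y, hy, h, rfl, rfl⟩,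
    by push_cast; ring, by push_cast; ring⟩

end Digraph'

open Digraph' in
theorem stmt6_general {V : Type*} (D : Digraph' V) (η : ℕ) (Vset : ℕ → Set V)
    (hD : D.IsLinConn η Vset)
    (κ : ℕ → ℕ) (u : ∀ i : ℕ, V → ZMod (κ i))
    (hu : ∀ i, 1 ≤ i → i ≤ η → IsImprimLabelling D (Vset i) (u i))
    (p : ℕ) (hp : 1 ≤ p) (hpη : p + 2 ≤ η)
    (i : ZMod (κ p)) (k : ZMod (κ (p + 2))) (x z : V)
    (hx : x ∈ Vset p) (hxi : u p x = i) (hz : z ∈ Vset (p + 2)) (hzk : u (p + 2) z = k)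
    (s : ℕ)
    (hw : D.HasWalk (s * (κ (p + 1) * κ (p + 2))) x z) :
    ∃ j : ZMod (κ (p + 1)), BAdj D Vset u p i j ∧ BAdj D Vset u (p + 1) j k := by
  obtain ⟨f, rfl, hfM, hf⟩ := hw
  set M := s * (κ (p + 1) * κ (p + 2))
  have hg := hD.unitSteps_componentIndex_walk hf
  have hg0 : hD.componentIndex (f 0) = p := hD.componentIndex_eq_of_mem hp (by omega) hx
  have hgM : hD.componentIndex (f M) = p + 2 :=
    hD.componentIndex_eq_of_mem (by omega) hpη (hfM ▸ hz)
  obtain ⟨t₁, ht₁, hgt₁, hgt₁'⟩ := hg.exists_crossing (q := p) (by omega) (by omega)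
  obtain ⟨t₂, ht₂, hgt₂, hgt₂'⟩ := hg.exists_crossing (q := p + 1) (by omega) (by omega)
  have ht₁₂ : t₁ < t₂ := by
    by_contra! h
    have := hg.monotoneOn (Set.mem_Iic.2 (h.trans ht₁.le)) (Set.mem_Iic.2 ht₁.le) h
    simp only [hgt₁, hgt₂] at this
    omega
  have mem : ∀ {q a b t}, hD.componentIndex (f a) = q → hD.componentIndex (f b) = q →
      a ≤ t → t ≤ b → b ≤ M → f t ∈ Vset q := fun ha hb hat htb hbM =>
    hg.eq_of_le_of_le ha hb hat htb hbM ▸ hD.mem_componentIndex _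
  have h₁ : u p (f t₁) - t₁ = u p (f 0) := by
    simpa using (hu p hp (by omega)).sub_eq_of_walk (Nat.zero_le t₁)
      (fun t _ ht => mem hg0 hgt₁ (Nat.zero_le t) ht ht₁.le) (fun t ht => hf t (by omega))
  have h₂ : u (p + 1) (f t₂) - t₂ = u (p + 1) (f (t₁ + 1)) - (t₁ + 1 : ℕ) :=
    (hu (p + 1) (by omega) (by omega)).sub_eq_of_walk ht₁₂
      (fun t h1 h2 => mem hgt₁' hgt₂ h1 h2 ht₂.le) (fun t ht => hf t (by omega))
  have h₃ : u (p + 2) (f M) - M = u (p + 2) (f (t₂ + 1)) - (t₂ + 1 : ℕ) :=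
    (hu (p + 2) (by omega) hpη).sub_eq_of_walk ht₂
      (fun t h1 h2 => mem hgt₂' hgM h1 h2 le_rfl) hf
  have hM : (M : ZMod (κ (p + 2))) = 0 :=
    (ZMod.natCast_eq_zero_iff M _).2 (dvd_mul_of_dvd_right (dvd_mul_left _ _) s)
  refine ⟨u (p + 1) (f (t₁ + 1)) - (t₁ + 1 : ℕ), ?_, ?_⟩
  · rw [← hxi, ← h₁]
    exact bAdj_sub_of_adj u (mem hg0 hgt₁ (Nat.zero_le t₁) le_rfl ht₁.le)
      (mem hgt₁' hgt₂ le_rfl ht₁₂ ht₂.le) (hf t₁ ht₁) t₁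
  · rw [← h₂, ← hzk, ← hfM, ← sub_zero (u (p + 2) (f M)), ← hM, h₃]
    exact bAdj_sub_of_adj u (mem hgt₁' hgt₂ ht₁₂ le_rfl ht₂.le)
      (mem hgt₂' hgM le_rfl ht₂ le_rfl) (hf t₂ ht₂) t₂

open Digraph' in
/-- if there is an `(x,z)`-walk of length `s·κ_{p+1}·κ_{p+2}` with
`x ∈ U_i^{(p)}` and `z ∈ U_k^{(p+2)}`, then for some `j`, `(i,j) ∈ E(B_{p,p+1})`
and `(j,k) ∈ E(B_{p+1,p+2})`. -/
theorem stmt6 {V : Type*} [Fintype V] (D : Digraph' V) (η : ℕ) (Vset : ℕ → Set V)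
    (hD : D.IsLinConn η Vset) (hη : 3 ≤ η)
    (hnt : ∀ i, 1 ≤ i → i ≤ η → ¬ IsTrivialComp (Vset i))
    (κ : ℕ → ℕ) (u : ∀ i : ℕ, V → ZMod (κ i))
    (hκ : ∀ i, 1 ≤ i → i ≤ η → IsImprimIndex D (Vset i) (κ i))
    (hu : ∀ i, 1 ≤ i → i ≤ η → IsImprimLabelling D (Vset i) (u i))
    (p : ℕ) (hp : 1 ≤ p) (hpη : p + 2 ≤ η)
    (i : ZMod (κ p)) (k : ZMod (κ (p + 2))) (x z : V)
    (hx : x ∈ Vset p) (hxi : u p x = i) (hz : z ∈ Vset (p + 2)) (hzk : u (p + 2) z = k)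
    (s : ℕ) (hs : 1 ≤ s)
    (hw : D.HasWalk (s * (κ (p + 1) * κ (p + 2))) x z) :
    ∃ j : ZMod (κ (p + 1)), BAdj D Vset u p i j ∧ BAdj D Vset u (p + 1) j k :=
  stmt6_general D η Vset hD κ u hu p hp hpη i k x z hx hxi hz hzk s hw
end

section
/- If D is a digraph that either has exactly one vertex or in which every vertex has at least one out-neighbor, then the sequence of m-step competition graphs {C(D^m)}_{m≥1} converges. -/
/-! If every vertex has an out-neighbor, any common `m`-step prey of `u` and `v` can be
extended by one arc to a common `(m+1)`-step prey, so `m ↦ C(D^m)` is monotone. A monotone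
sequence in the finite lattice of simple graphs on `V` is eventually constant. On a single
vertex every simple graph is edgeless, so the sequence is constant. -/

namespace Digraph'

variable {V : Type*}

theorem HasWalk.snoc {D : Digraph' V} {m : ℕ} {u z z' : V} (h : D.HasWalk m u z)
    (h' : D.Adj z z') : D.HasWalk (m + 1) u z' := by
  obtain ⟨f, hf0, hfm, hf⟩ := h
  refine ⟨Function.update f (m + 1) z', by simp [hf0], by simp, fun t ht => ?_⟩
  rcases Nat.lt_or_ge t m with htm | htm
  · simpa [Function.update_of_ne (by omega : t ≠ m + 1),
      Function.update_of_ne (by omega : t + 1 ≠ m + 1)] using hf t htm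
  · obtain rfl : t = m := by omega
    simpa [Function.update_of_ne (by omega : t ≠ t + 1), hfm] using h'

variable (D : Digraph' V)

theorem compGraph_monotone (hout : ∀ v, ∃ w, D.Adj v w) : Monotone D.compGraph := by
  refine monotone_nat_of_le_succ fun m a b ⟨hne, z, ha, hb⟩ => ?_
  obtain ⟨z', hz'⟩ := hout z
  exact ⟨hne, z', ha.snoc hz', hb.snoc hz'⟩

theorem compConverges_of_monotone [Finite V] (hmono : Monotone D.compGraph) :
    D.CompConverges := by
  obtain ⟨n, hn⟩ := WellFoundedGT.monotone_chain_condition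
    ⟨fun m => D.compGraph (m + 1), fun _ _ hle => hmono (by omega)⟩
  refine ⟨n + 1, by omega, fun m hm => ?_⟩
  obtain ⟨k, rfl⟩ := Nat.exists_eq_add_of_le' (by omega : 1 ≤ m)
  exact (hn k (by omega)).symm

theorem compConverges_of_subsingleton [Subsingleton V] : D.CompConverges :=
  ⟨1, le_rfl, fun _ _ => Subsingleton.elim _ _⟩

end Digraph'

open Digraph' in
/-- if `D` has exactly one vertex or every vertex of `D` has an
out-neighbor, then `{C(D^m)}_{m≥1}` converges. -/
theorem stmt12 {V : Type*} [Fintype V] (D : Digraph' V)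
    (h : (∃ v : V, ∀ w : V, w = v) ∨ ∀ v : V, ∃ w : V, D.Adj v w) :
    D.CompConverges := by
  rcases h with ⟨v, hv⟩ | hout
  · have : Subsingleton V := ⟨fun a b => (hv a).trans (hv b).symm⟩
    exact D.compConverges_of_subsingleton
  · exact D.compConverges_of_monotone (D.compGraph_monotone hout)
end
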